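/- arXiv:0712.3442 — 2 statements merged into one kernel-verified Lean document; each statement's English description precedes it below -/
import Mathlib

section
/- In the setting of the conditioned limit theorem: let (X, Y*) be an ℝ × (0,∞)-valued random vector, α : (0,∞) → (0,∞), β : (0,∞) → ℝ, and F : ℝ × (0,∞) → [0,∞) such that (i) for every y > 0 and every continuity point x of u ↦ F(u,y), t·P[(X − β(t))/α(t) ≤ x, Y* > t·y] → F(x,y); (ii) H(x) := F(x,1) is a nondegenerate probability distribution function; (iii) t·P[Y* > t] → 1; and let ψ₁(c) = lim_t α(tc)/α(t) and ψ₂(c) = lim_t (β(tc) − β(t))/α(t), which exist for all c > 0. Then the limit is a product, i.e., F(x, y) = H(x)·y^{-1} for all y > 0 and all continuity points x of H, if and only if ψ₁(c) = 1 and ψ₂(c) = 0 for all c > 0. -/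
open MeasureTheory ProbabilityTheory Filter

/-- A point of increase of a function `G : ℝ → ℝ`. -/
def IsPointOfIncrease (G : ℝ → ℝ) (x : ℝ) : Prop :=
  ∀ ε : ℝ, 0 < ε → G (x - ε) < G (x + ε)

/-!
Replacing `t` by `t c` in the defining limit and renormalizing gives
`F(x, c y) = c⁻¹ F((x - ψ₂ c) / ψ₁ c, y)` at continuity points, the moving threshold being
handled by monotonicity in `x`. For `y = 1` and `ψ₁ c = 1`, `ψ₂ c = 0` this is the product form.
Conversely, the product form makes `H` invariant under `x ↦ (x - ψ₂ c) / ψ₁ c`. A monotone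
function invariant under a homothety of ratio `≠ 1` is constant on each side of its centre, so its
only possible point of increase is the centre; and a monotone function invariant under a
nonzero translation is constant. Both contradict the nondegeneracy of `H`.
-/

open Set Topology Function

theorem Function.Injective.tendsto_cocountable {α β : Type*} {f : α → β} (hf : Injective f) :
    Tendsto f cocountable cocountable :=
  fun _ hs => mem_cocountable.2 ((mem_cocountable.1 hs).preimage hf)

theorem dense_setOf_of_eventually_cocountable {p : ℝ → Prop} (h : ∀ᶠ u in cocountable, p u) :
    Dense {u | p u} := by
  simpa using (mem_cocountable.1 h).dense_compl ℝ

theorem Monotone.eventually_continuousAt_cocountable {α β : Type*} [LinearOrder α]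
    [TopologicalSpace α] [OrderTopology α] [LinearOrder β] [TopologicalSpace β] [OrderTopology β]
    [SecondCountableTopology β] {f : α → β} (hf : Monotone f) :
    ∀ᶠ u in cocountable, ContinuousAt f u :=
  mem_cocountable.2 hf.countable_not_continuousAt

section DenseOrder

variable {α β : Type*} [TopologicalSpace α] [LinearOrder α] [OrderTopology α] [DenselyOrdered α]
  [TopologicalSpace β] [LinearOrder β] [OrderTopology β]

theorem tendsto_apply_of_monotone_of_dense [NoMinOrder α] [NoMaxOrder α] {ι : Type*}
    {l : Filter ι} {g : ι → α → β} {G : α → β} {S : Set α} (hg : ∀ᶠ i in l, Monotone (g i))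
    (hS : Dense S) (hlim : ∀ u ∈ S, Tendsto (fun i => g i u) l (𝓝 (G u)))
    {m : ι → α} {u₀ : α} (hm : Tendsto m l (𝓝 u₀)) (hG : ContinuousAt G u₀) :
    Tendsto (fun i => g i (m i)) l (𝓝 (G u₀)) := by
  refine tendsto_order.2 ⟨fun a ha => ?_, fun a ha => ?_⟩
  · obtain ⟨v, hv, hva⟩ := exists_Ioc_subset_of_mem_nhds (hG.eventually (lt_mem_nhds ha))
      (exists_lt u₀)
    obtain ⟨u, huS, hvu, hu⟩ := hS.exists_between hv
    filter_upwards [hm.eventually (lt_mem_nhds hu),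
      (tendsto_order.1 (hlim u huS)).1 a (hva ⟨hvu, hu.le⟩), hg] with i hmi hgi hmono
    exact hgi.trans_le (hmono hmi.le)
  · obtain ⟨v, hv, hva⟩ := exists_Ico_subset_of_mem_nhds (hG.eventually (gt_mem_nhds ha))
      (exists_gt u₀)
    obtain ⟨u, huS, hu, huv⟩ := hS.exists_between hv
    filter_upwards [hm.eventually (gt_mem_nhds hu),
      (tendsto_order.1 (hlim u huS)).2 a (hva ⟨hu.le, huv⟩), hg] with i hmi hgi hmono
    exact (hmono hmi.le).trans_lt hgi

theorem Monotone.eq_of_eqOn_dense [NoMinOrder α] [NoMaxOrder α] {G₁ G₂ : α → β}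
    (h₁ : Monotone G₁) {S : Set α} (hS : Dense S) (h : EqOn G₁ G₂ S) {x : α}
    (hx : ContinuousAt G₂ x) : G₁ x = G₂ x :=
  tendsto_const_nhds_iff.1 <| tendsto_apply_of_monotone_of_dense (l := (atTop : Filter ℕ))
    (.of_forall fun _ => h₁) hS (fun u hu => by rw [← h hu]; exact tendsto_const_nhds)
    tendsto_const_nhds hx

theorem eq_of_continuousWithinAt_Ici_of_eqOn_dense [NoMaxOrder α] {G₁ G₂ : α → β}
    {S : Set α} (hS : Dense S) (h : EqOn G₁ G₂ S) {x : α}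
    (h₁ : ContinuousWithinAt G₁ (Ici x) x) (h₂ : ContinuousWithinAt G₂ (Ici x) x) :
    G₁ x = G₂ x := by
  have hx : x ∈ closure (Ioi x ∩ S) :=
    closure_minimal (hS.open_subset_closure_inter isOpen_Ioi) isClosed_closure
      (closure_Ioi x ▸ mem_Ici.2 le_rfl)
  have := mem_closure_iff_nhdsWithin_neBot.1 hx
  have hsub : Ioi x ∩ S ⊆ Ici x := inter_subset_left.trans Ioi_subset_Ici_self
  exact tendsto_nhds_unique_of_eventuallyEq (h₁.mono hsub) (h₂.mono hsub)
    (eventually_nhdsWithin_of_forall fun _ hu => h hu.2)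

end DenseOrder

theorem Function.Periodic.eq_of_monotone {α β : Type*} [AddCommGroup α] [LinearOrder α]
    [IsOrderedAddMonoid α] [Archimedean α] [PartialOrder β] {f : α → β} {c : α}
    (hf : Periodic f c) (hc : c ≠ 0) (hmono : Monotone f) (x y : α) : f x = f y := by
  wlog hc₀ : 0 < c generalizing c
  · exact this hf.neg (neg_ne_zero.2 hc) (neg_pos.2 (lt_of_le_of_ne (not_lt.1 hc₀) hc))
  wlog hxy : x ≤ y generalizing x y
  · exact (this y x (le_of_not_ge hxy)).symm
  obtain ⟨n, hn⟩ := Archimedean.arch (y - x) hc₀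
  refine le_antisymm (hmono hxy) ?_
  calc f y ≤ f (x + n • c) := hmono (sub_le_iff_le_add'.1 hn)
    _ = f x := hf.nsmul n x

theorem IsPointOfIncrease.eq_of_comp_homothety {H : ℝ → ℝ} (hH : Monotone H) {a p z : ℝ}
    (ha₀ : 0 < a) (ha₁ : a ≠ 1) (hfix : ∀ x, H (a * (x - p) + p) = H x)
    (hz : IsPointOfIncrease H z) : z = p := by
  wlog ha : a < 1 generalizing a
  · refine this (inv_pos.2 ha₀) (inv_ne_one.2 ha₁) (fun x => ?_)
      (inv_lt_one_of_one_lt₀ (lt_of_le_of_ne (not_lt.1 ha) (Ne.symm ha₁)))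
    rw [← hfix (a⁻¹ * (x - p) + p)]
    congr 1
    field_simp
    ring
  have hiter : ∀ (n : ℕ) (x : ℝ), H (a ^ n * (x - p) + p) = H x := by
    intro n
    induction n with
    | zero => simp
    | succ n ih =>
      intro x
      rw [show a ^ (n + 1) * (x - p) + p = a * (a ^ n * (x - p) + p - p) + p by ring, hfix, ih]
  have hlim : ∀ d : ℝ, Tendsto (fun n : ℕ => a ^ n * d + p) atTop (𝓝 p) := fun d => by
    simpa using ((tendsto_pow_atTop_nhds_zero_of_lt_one ha₀.le ha).mul_const d).add_const p
  by_contra hzp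
  rcases lt_or_gt_of_ne hzp with h | h
  · obtain ⟨n, hn⟩ := ((hlim (z - (p - z) / 2 - p)).eventually
      (lt_mem_nhds (show z + (p - z) / 2 < p by linarith))).exists
    have hle := hH hn.le
    rw [hiter] at hle
    exact (hz _ (by linarith)).not_ge hle
  · obtain ⟨n, hn⟩ := ((hlim (z + (z - p) / 2 - p)).eventually
      (gt_mem_nhds (show p < z - (z - p) / 2 by linarith))).exists
    have hle := hH hn.le
    rw [hiter] at hle
    exact (hz _ (by linarith)).not_ge hle

theorem pos_of_tendsto_div_comp_mul {α ψ : ℝ → ℝ} (hα : ∀ t, 0 < t → 0 < α t)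
    (hψ : ∀ c, 0 < c → Tendsto (fun t => α (t * c) / α t) atTop (𝓝 (ψ c))) {c : ℝ}
    (hc : 0 < c) : 0 < ψ c := by
  have hinv : Tendsto (fun t => α (t * c * c⁻¹) / α (t * c)) atTop (𝓝 (ψ c⁻¹)) :=
    (hψ c⁻¹ (inv_pos.2 hc)).comp (tendsto_id.atTop_mul_const hc)
  have hprod : ψ c * ψ c⁻¹ = 1 := by
    refine tendsto_nhds_unique ((hψ c hc).mul hinv) (tendsto_const_nhds.congr' ?_)
    filter_upwards [eventually_gt_atTop 0] with t ht
    have := hα t ht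
    have := hα _ (mul_pos ht hc)
    rw [mul_inv_cancel_right₀ hc.ne']
    field_simp
  have hnonneg : 0 ≤ ψ c := ge_of_tendsto (hψ c hc) <| by
    filter_upwards [eventually_gt_atTop 0] with t ht
    exact div_nonneg (hα _ (mul_pos ht hc)).le (hα t ht).le
  exact hnonneg.lt_of_ne fun h => by simp [← h] at hprod

theorem eq_one_and_eq_zero_of_forall_eq_comp_affine {H : ℝ → ℝ} (hH : Monotone H) {x₁ x₂ : ℝ}
    (hne : x₁ ≠ x₂) (hx₁ : IsPointOfIncrease H x₁) (hx₂ : IsPointOfIncrease H x₂) {a b : ℝ}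
    (ha : 0 < a) (hinv : ∀ x, H x = H ((x - b) / a)) : a = 1 ∧ b = 0 := by
  have ha₁ : a = 1 := by
    by_contra ha₁
    -- `b / (1 - a)` is the fixed point of `x ↦ (x - b) / a`.
    have hfix : ∀ x, H (a⁻¹ * (x - b / (1 - a)) + b / (1 - a)) = H x := fun x => by
      rw [hinv x]
      congr 1
      field_simp [sub_ne_zero.2 (Ne.symm ha₁)]
      ring
    have hhom := fun z (hz : IsPointOfIncrease H z) =>
      hz.eq_of_comp_homothety hH (inv_pos.2 ha) (inv_ne_one.2 ha₁) hfix
    exact hne ((hhom x₁ hx₁).trans (hhom x₂ hx₂).symm)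
  subst ha₁
  refine ⟨rfl, ?_⟩
  by_contra hb
  have hper : Periodic H (-b) := fun x => by simp [hinv x, sub_eq_add_neg]
  exact (hx₁ 1 one_pos).ne (hper.eq_of_monotone (neg_ne_zero.2 hb) hH _ _)

section ConditionedLimit

variable {Ω : Type*} [MeasureSpace Ω]

noncomputable def scaledJointTail (X Ys : Ω → ℝ) (α β : ℝ → ℝ) (t x y : ℝ) : ℝ :=
  t * (ℙ {ω | (X ω - β t) / α t ≤ x ∧ t * y < Ys ω}).toReal

theorem scaledJointTail_monotone [IsFiniteMeasure (ℙ : Measure Ω)] (X Ys : Ω → ℝ)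
    (α β : ℝ → ℝ) {t : ℝ} (ht : 0 ≤ t) (y : ℝ) :
    Monotone (fun x => scaledJointTail X Ys α β t x y) := fun _ _ hxx' =>
  mul_le_mul_of_nonneg_left (ENNReal.toReal_mono (measure_ne_top _ _)
    (measure_mono fun _ hω => ⟨hω.1.trans hxx', hω.2⟩)) ht

theorem scaledJointTail_mul (X Ys : Ω → ℝ) (α β : ℝ → ℝ) {t c : ℝ} (hc : 0 < c)
    (hαt : 0 < α t) (hαtc : 0 < α (t * c)) (x y : ℝ) :
    scaledJointTail X Ys α β t x (c * y) =
      c⁻¹ * scaledJointTail X Ys α β (t * c) ((x * α t + β t - β (t * c)) / α (t * c)) y := by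
  have hset : {ω | (X ω - β t) / α t ≤ x ∧ t * (c * y) < Ys ω} =
      {ω | (X ω - β (t * c)) / α (t * c) ≤ (x * α t + β t - β (t * c)) / α (t * c) ∧
        t * c * y < Ys ω} := by
    ext ω
    simp only [mem_ofPred_eq, div_le_iff₀ hαt, div_le_div_iff_of_pos_right hαtc, mul_assoc]
    constructor <;> rintro ⟨h1, h2⟩ <;> exact ⟨by linarith, h2⟩
  rw [scaledJointTail, scaledJointTail, hset]
  field_simp

theorem eq_inv_mul_of_tendsto_scaledJointTail [IsFiniteMeasure (ℙ : Measure Ω)]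
    {X Ys : Ω → ℝ} {α β : ℝ → ℝ} (hα : ∀ t, 0 < t → 0 < α t) {F : ℝ → ℝ → ℝ}
    (hconv : ∀ y, 0 < y → ∀ x, ContinuousAt (F · y) x →
      Tendsto (fun t => scaledJointTail X Ys α β t x y) atTop (𝓝 (F x y)))
    {c a b : ℝ} (hc : 0 < c) (ha : 0 < a)
    (hψ₁ : Tendsto (fun t => α (t * c) / α t) atTop (𝓝 a))
    (hψ₂ : Tendsto (fun t => (β (t * c) - β t) / α t) atTop (𝓝 b))
    {y : ℝ} (hy : 0 < y) (hFy : Monotone (F · y)) {x : ℝ}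
    (hx : ContinuousAt (F · (c * y)) x) (hx' : ContinuousAt (F · y) ((x - b) / a)) :
    F x (c * y) = c⁻¹ * F ((x - b) / a) y := by
  have hm : Tendsto (fun t => (x * α t + β t - β (t * c)) / α (t * c)) atTop
      (𝓝 ((x - b) / a)) := by
    refine ((tendsto_const_nhds.sub hψ₂).div hψ₁ ha.ne').congr' ?_
    filter_upwards [eventually_gt_atTop 0] with t ht
    have := hα t ht
    have := hα _ (mul_pos ht hc)
    simp only [Pi.div_apply]
    field_simp
    ring
  have hmono : ∀ᶠ t in atTop,
      Monotone (fun u => c⁻¹ * scaledJointTail X Ys α β (t * c) u y) := by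
    filter_upwards [eventually_ge_atTop 0] with t ht
    exact (scaledJointTail_monotone X Ys α β (mul_nonneg ht hc.le) y).const_mul
      (inv_nonneg.2 hc.le)
  have hlim : ∀ u ∈ {u | ContinuousAt (F · y) u}, Tendsto
      (fun t => c⁻¹ * scaledJointTail X Ys α β (t * c) u y) atTop (𝓝 (c⁻¹ * F u y)) :=
    fun u hu => ((hconv y hy u hu).comp (tendsto_id.atTop_mul_const hc)).const_mul c⁻¹
  refine tendsto_nhds_unique ((hconv _ (mul_pos hc hy) x hx).congr' ?_)
    (tendsto_apply_of_monotone_of_dense hmono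
      (dense_setOf_of_eventually_cocountable hFy.eventually_continuousAt_cocountable) hlim hm
      (hx'.const_mul c⁻¹))
  filter_upwards [eventually_gt_atTop 0] with t ht
  exact scaledJointTail_mul X Ys α β hc (hα t ht) (hα _ (mul_pos ht hc)) x y

end ConditionedLimit

theorem stmt_16_general {Ω : Type*} [MeasureSpace Ω] [IsProbabilityMeasure (ℙ : Measure Ω)]
    (X Ys : Ω → ℝ)
    (α : ℝ → ℝ) (β : ℝ → ℝ) (hα_pos : ∀ t : ℝ, 0 < t → 0 < α t)
    (F : ℝ → ℝ → ℝ)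
    (hF_mono : ∀ y : ℝ, 0 < y → Monotone (fun x => F x y))
    (hconv : ∀ y : ℝ, 0 < y → ∀ x : ℝ, ContinuousAt (fun u => F u y) x →
      Tendsto (fun t : ℝ =>
          t * (ℙ {ω | (X ω - β t) / α t ≤ x ∧ t * y < Ys ω}).toReal) atTop
        (nhds (F x y)))
    -- `H := F(·,1)` is a nondegenerate probability distribution function:
    (hH_rc : ∀ x : ℝ, ContinuousWithinAt (fun u => F u 1) (Set.Ici x) x)
    (hH_nondeg : ∃ x₁ x₂ : ℝ, x₁ ≠ x₂ ∧
      IsPointOfIncrease (fun x => F x 1) x₁ ∧ IsPointOfIncrease (fun x => F x 1) x₂)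
    (ψ₁ ψ₂ : ℝ → ℝ)
    (hψ₁ : ∀ c : ℝ, 0 < c →
      Tendsto (fun t : ℝ => α (t * c) / α t) atTop (nhds (ψ₁ c)))
    (hψ₂ : ∀ c : ℝ, 0 < c →
      Tendsto (fun t : ℝ => (β (t * c) - β t) / α t) atTop (nhds (ψ₂ c))) :
    (∀ y : ℝ, 0 < y → ∀ x : ℝ, ContinuousAt (fun u => F u 1) x →
        F x y = F x 1 * y⁻¹) ↔
      (∀ c : ℝ, 0 < c → ψ₁ c = 1 ∧ ψ₂ c = 0) := by
  have hψ₁_pos c (hc : 0 < c) : 0 < ψ₁ c := pos_of_tendsto_div_comp_mul hα_pos hψ₁ hc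
  have hH := hF_mono 1 one_pos
  have hscale c (hc : 0 < c) x (hx : ContinuousAt (F · c) x)
      (hx' : ContinuousAt (F · 1) ((x - ψ₂ c) / ψ₁ c)) :
      F x c = c⁻¹ * F ((x - ψ₂ c) / ψ₁ c) 1 := by
    simpa using eq_inv_mul_of_tendsto_scaledJointTail hα_pos hconv hc (hψ₁_pos c hc) (hψ₁ c hc)
      (hψ₂ c hc) one_pos hH (by simpa using hx) hx'
  constructor
  · intro hprod c hc
    obtain ⟨x₁, x₂, hne, hx₁, hx₂⟩ := hH_nondeg
    have hφ : StrictMono fun x => (x - ψ₂ c) / ψ₁ c := fun u v huv =>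
      div_lt_div_of_pos_right (sub_lt_sub_right huv _) (hψ₁_pos c hc)
    refine eq_one_and_eq_zero_of_forall_eq_comp_affine hH hne hx₁ hx₂ (hψ₁_pos c hc) fun x => ?_
    refine eq_of_continuousWithinAt_Ici_of_eqOn_dense (G₂ := fun u => F ((u - ψ₂ c) / ψ₁ c) 1)
      (dense_setOf_of_eventually_cocountable ?_) (fun _ hu => hu) (hH_rc x)
      ((hH_rc _).comp (by fun_prop) hφ.monotone.mapsTo_Ici)
    filter_upwards [(hF_mono c hc).eventually_continuousAt_cocountable,
      hH.eventually_continuousAt_cocountable,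
      hφ.injective.tendsto_cocountable.eventually hH.eventually_continuousAt_cocountable]
      with u hu hu₁ hφu
    have := hscale c hc u hu hφu
    rw [hprod c hc u hu₁, mul_comm] at this
    exact mul_left_cancel₀ (inv_ne_zero hc.ne') this
  · intro hψ y hy x hx
    obtain ⟨h₁, h₂⟩ := hψ y hy
    refine (hF_mono y hy).eq_of_eqOn_dense (G₂ := fun u => F u 1 * y⁻¹)
      (dense_setOf_of_eventually_cocountable ?_) (fun _ hu => hu) (hx.mul continuousAt_const)
    filter_upwards [(hF_mono y hy).eventually_continuousAt_cocountable,
      hH.eventually_continuousAt_cocountable] with u hu hu₁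
    have := hscale y hy u hu (by rwa [h₁, h₂, sub_zero, div_one])
    rwa [h₁, h₂, sub_zero, div_one, mul_comm] at this

/-- In the setting of the conditioned limit theorem with the `Y`-variable
standardized, the limit is a product, `F(x,y) = H(x)·y⁻¹` at continuity points of
`H = F(·,1)`, if and only if `ψ₁(c) = lim α(tc)/α(t) = 1` and
`ψ₂(c) = lim (β(tc) - β(t))/α(t) = 0` for all `c > 0`. -/
theorem stmt_16 {Ω : Type*} [MeasureSpace Ω] [IsProbabilityMeasure (ℙ : Measure Ω)]
    (X Ys : Ω → ℝ) (hXm : Measurable X) (hYm : Measurable Ys)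
    (hYpos : ∀ ω, 0 < Ys ω)
    (α : ℝ → ℝ) (β : ℝ → ℝ) (hα_pos : ∀ t : ℝ, 0 < t → 0 < α t)
    (F : ℝ → ℝ → ℝ) (hF_nonneg : ∀ x y, 0 ≤ F x y)
    (hF_mono : ∀ y : ℝ, 0 < y → Monotone (fun x => F x y))
    (hconv : ∀ y : ℝ, 0 < y → ∀ x : ℝ, ContinuousAt (fun u => F u y) x →
      Tendsto (fun t : ℝ =>
          t * (ℙ {ω | (X ω - β t) / α t ≤ x ∧ t * y < Ys ω}).toReal) atTop
        (nhds (F x y)))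
    -- `H := F(·,1)` is a nondegenerate probability distribution function:
    (hH_rc : ∀ x : ℝ, ContinuousWithinAt (fun u => F u 1) (Set.Ici x) x)
    (hH_top : Tendsto (fun x => F x 1) atTop (nhds 1))
    (hH_bot : Tendsto (fun x => F x 1) atBot (nhds 0))
    (hH_nondeg : ∃ x₁ x₂ : ℝ, x₁ ≠ x₂ ∧
      IsPointOfIncrease (fun x => F x 1) x₁ ∧ IsPointOfIncrease (fun x => F x 1) x₂)
    (hYstd : Tendsto (fun t : ℝ => t * (ℙ {ω | t < Ys ω}).toReal) atTop (nhds 1))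
    (ψ₁ ψ₂ : ℝ → ℝ)
    (hψ₁ : ∀ c : ℝ, 0 < c →
      Tendsto (fun t : ℝ => α (t * c) / α t) atTop (nhds (ψ₁ c)))
    (hψ₂ : ∀ c : ℝ, 0 < c →
      Tendsto (fun t : ℝ => (β (t * c) - β t) / α t) atTop (nhds (ψ₂ c))) :
    (∀ y : ℝ, 0 < y → ∀ x : ℝ, ContinuousAt (fun u => F u 1) x →
        F x y = F x 1 * y⁻¹) ↔
      (∀ c : ℝ, 0 < c → ψ₁ c = 1 ∧ ψ₂ c = 0) :=
  stmt_16_general X Ys α β hα_pos F hF_mono hconv hH_rc hH_nondeg ψ₁ ψ₂ hψ₁ hψ₂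
end

section
/- Let N₁, N₂ be independent standard normal random variables, let ρ ∈ (−1, 1), and set X = √(1−ρ²)·N₁ + ρ·N₂ and Y = N₂, so (X,Y) is bivariate normal with standard normal marginals and correlation ρ. Let Φ be the standard normal distribution function, b(t) = (1/(1−Φ))^←(t) (left-continuous inverse) and a(t) = 1/√(2 log t) for t > 1. Then for every x ∈ ℝ and y ∈ ℝ, t·P[X − ρ·b(t) ≤ x, (Y − b(t))/a(t) > y] → Φ(x/√(1−ρ²))·e^{−y} as t → ∞. -/
open MeasureTheory ProbabilityTheory Filter

/-- The standard normal distribution function. -/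
noncomputable def stdNormalCDF (x : ℝ) : ℝ :=
  ∫ t in Set.Iic x, Real.exp (-(t ^ 2) / 2) / Real.sqrt (2 * Real.pi)

open Real Set Topology

/-!
Given `N₂ > b(t) + a(t) y`, the excess `N₂ - b(t)` is of order `a(t) → 0`, so `ρ (N₂ - b(t))`
is negligible and `X - ρ b(t) ≈ √(1 - ρ²) N₁` is independent of the conditioning event.
Truncating at `N₂ - b(t) ≤ a(t) M` sandwiches the probability between
`Φ((x ∓ a(t) M) / √(1 - ρ²)) P[N₂ > b(t) + a(t) y] ∓ P[N₂ > b(t) + a(t) M]`.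
The Gumbel limit `t P[N₂ > b(t) + a(t) z] → e^{-z}` follows from Mills' ratio,
`v (1 - Φ v) / φ v → 1`, which also gives `a(t) b(t) → 1`; let `t → ∞`, then `M → ∞`.
-/

lemma continuous_gaussianPDFReal (μ : ℝ) (v : NNReal) : Continuous (gaussianPDFReal μ v) := by
  unfold gaussianPDFReal; fun_prop

local notation "φ" => gaussianPDFReal 0 1

lemma gaussianPDFReal_zero_one (t : ℝ) : φ t = exp (-(t ^ 2) / 2) / √(2 * π) := by
  simp [gaussianPDFReal, div_eq_inv_mul]

lemma gaussianPDFReal_zero_one_eq : φ = fun t => exp (-(t ^ 2) / 2) / √(2 * π) :=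
  funext gaussianPDFReal_zero_one

lemma gaussianPDFReal_zero_one_pos (t : ℝ) : 0 < φ t := gaussianPDFReal_pos 0 1 t one_ne_zero

lemma hasDerivAt_gaussianPDFReal_zero_one (t : ℝ) : HasDerivAt φ (-t * φ t) t := by
  have h : HasDerivAt (fun t : ℝ => -(t ^ 2) / 2) (-t) t := by
    refine ((hasDerivAt_pow 2 t).neg.div_const 2).congr_deriv ?_
    push_cast; ring
  rw [gaussianPDFReal_zero_one_eq]
  refine (h.exp.div_const √(2 * π)).congr_deriv ?_
  ring

lemma tendsto_gaussianPDFReal_zero_one_atTop : Tendsto φ atTop (𝓝 0) := by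
  have h : Tendsto (fun t : ℝ => -(t ^ 2) / 2) atTop atBot :=
    (tendsto_neg_atBot_iff.2 (tendsto_pow_atTop two_ne_zero)).atBot_div_const two_pos
  rw [gaussianPDFReal_zero_one_eq, ← zero_div √(2 * π)]
  exact (tendsto_exp_atBot.comp h).div_const _

lemma integrable_mul_gaussianPDFReal_zero_one : Integrable fun t => t * φ t := by
  convert (integrable_mul_exp_neg_mul_sq (b := 1 / 2) (by norm_num)).mul_const (√(2 * π))⁻¹
    using 2 with t
  rw [gaussianPDFReal_zero_one, div_eq_mul_inv]; ring_nf

lemma gaussianPDFReal_zero_one_add (u d : ℝ) :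
    φ (u + d) = exp (-(u * d + d ^ 2 / 2)) * φ u := by
  rw [gaussianPDFReal_zero_one, gaussianPDFReal_zero_one, ← mul_div_assoc, ← exp_add]
  ring_nf

lemma stdNormalCDF_eq_integral (x : ℝ) : stdNormalCDF x = ∫ t in Iic x, φ t := by
  simp only [stdNormalCDF, gaussianPDFReal_zero_one]

lemma gaussianReal_zero_one_real (s : Set ℝ) : (gaussianReal 0 1).real s = ∫ t in s, φ t := by
  rw [measureReal_def, gaussianReal_apply_eq_integral _ one_ne_zero,
    ENNReal.toReal_ofReal (setIntegral_nonneg_of_ae (ae_of_all _ (gaussianPDFReal_nonneg 0 1)))]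

lemma stdNormalCDF_eq_cdf : stdNormalCDF = cdf (gaussianReal 0 1) := by
  ext x
  rw [cdf_eq_real, gaussianReal_zero_one_real, stdNormalCDF_eq_integral]

lemma one_sub_stdNormalCDF (x : ℝ) : 1 - stdNormalCDF x = ∫ t in Ioi x, φ t := by
  rw [stdNormalCDF_eq_cdf, cdf_eq_real, ← probReal_compl_eq_one_sub measurableSet_Iic, compl_Iic,
    gaussianReal_zero_one_real]

lemma stdNormalCDF_sub_stdNormalCDF (u v : ℝ) :
    stdNormalCDF v - stdNormalCDF u = ∫ t in u..v, φ t := by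
  rw [stdNormalCDF_eq_integral, stdNormalCDF_eq_integral]
  exact intervalIntegral.integral_Iic_sub_Iic (integrable_gaussianPDFReal 0 1).integrableOn
    (integrable_gaussianPDFReal 0 1).integrableOn

lemma continuous_stdNormalCDF : Continuous stdNormalCDF := by
  have h : stdNormalCDF = fun x => stdNormalCDF 0 + ∫ t in (0 : ℝ)..x, φ t := by
    ext x
    rw [← stdNormalCDF_sub_stdNormalCDF]
    ring
  rw [h]
  exact continuous_const.add <| intervalIntegral.continuous_primitive
    (fun _ _ => (integrable_gaussianPDFReal 0 1).intervalIntegrable) 0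

lemma strictMono_stdNormalCDF : StrictMono stdNormalCDF := fun u v huv => by
  rw [← sub_pos, stdNormalCDF_sub_stdNormalCDF]
  exact intervalIntegral.intervalIntegral_pos_of_pos_on
    (integrable_gaussianPDFReal 0 1).intervalIntegrable
    (fun t _ => gaussianPDFReal_zero_one_pos t) huv

lemma stdNormalCDF_lt_one (x : ℝ) : stdNormalCDF x < 1 :=
  (strictMono_stdNormalCDF (lt_add_one x)).trans_le (stdNormalCDF_eq_cdf ▸ cdf_le_one _ _)

lemma tendsto_stdNormalCDF_atTop : Tendsto stdNormalCDF atTop (𝓝 1) :=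
  stdNormalCDF_eq_cdf ▸ tendsto_cdf_atTop _

lemma tendsto_stdNormalCDF_atBot : Tendsto stdNormalCDF atBot (𝓝 0) :=
  stdNormalCDF_eq_cdf ▸ tendsto_cdf_atBot _

lemma one_sub_stdNormalCDF_le {v : ℝ} (hv : 0 < v) : 1 - stdNormalCDF v ≤ φ v / v := by
  have hint : ∫ t in Ioi v, t * φ t = φ v := by
    rw [integral_Ioi_of_hasDerivAt_of_tendsto' (f := fun t => -φ t)
      (fun t _ => (hasDerivAt_gaussianPDFReal_zero_one t).neg.congr_deriv (by ring))
      integrable_mul_gaussianPDFReal_zero_one.integrableOn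
      (by simpa using tendsto_gaussianPDFReal_zero_one_atTop.neg)]
    ring
  rw [one_sub_stdNormalCDF, ← hint, ← integral_div]
  refine setIntegral_mono_on (integrable_gaussianPDFReal 0 1).integrableOn
    (integrable_mul_gaussianPDFReal_zero_one.div_const v).integrableOn measurableSet_Ioi
    fun t ht => ?_
  rw [mul_div_right_comm]
  exact le_mul_of_one_le_left (gaussianPDFReal_nonneg 0 1 t) ((one_le_div hv).2 (le_of_lt ht))

/-- The derivative of `-(t⁻¹ - (t ^ 3)⁻¹) φ t` is `(1 - 3 / t ^ 4) φ t ≤ φ t`. -/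
lemma le_one_sub_stdNormalCDF {v : ℝ} (hv : 0 < v) :
    φ v * (v⁻¹ - (v ^ 3)⁻¹) ≤ 1 - stdNormalCDF v := by
  have hderiv : ∀ t ∈ Ici v, HasDerivAt (fun t => -(φ t * (t⁻¹ - (t ^ 3)⁻¹)))
      ((1 - 3 / t ^ 4) * φ t) t := fun t ht => by
    have ht : t ≠ 0 := (hv.trans_le ht).ne'
    refine ((hasDerivAt_gaussianPDFReal_zero_one t).mul
      ((hasDerivAt_inv ht).sub ((hasDerivAt_pow 3 t).inv (pow_ne_zero 3 ht)))).neg.congr_deriv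
      ?_
    simp only [Pi.sub_apply, Pi.inv_apply]
    field_simp
    ring
  have hint : IntegrableOn (fun t => (1 - 3 / t ^ 4) * φ t) (Ioi v) := by
    refine Integrable.mono'
      ((integrable_gaussianPDFReal 0 1).const_mul (1 + 3 / v ^ 4)).integrableOn
      (((continuousOn_const.sub (continuousOn_const.div (continuous_pow 4).continuousOn
        fun t ht => pow_ne_zero 4 (hv.trans ht).ne')).mul
        (continuous_gaussianPDFReal 0 1).continuousOn).aestronglyMeasurable measurableSet_Ioi)
      (ae_restrict_of_forall_mem measurableSet_Ioi fun t ht => ?_)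
    have h3 : 3 / t ^ 4 ≤ 3 / v ^ 4 := by gcongr; exact le_of_lt ht
    have h0 : 0 ≤ 3 / t ^ 4 := by have := hv.trans ht; positivity
    rw [norm_mul, Real.norm_of_nonneg (gaussianPDFReal_nonneg 0 1 t), Real.norm_eq_abs]
    exact mul_le_mul_of_nonneg_right (abs_le.2 ⟨by linarith, by linarith⟩)
      (gaussianPDFReal_nonneg 0 1 t)
  have hlim : Tendsto (fun t => -(φ t * (t⁻¹ - (t ^ 3)⁻¹))) atTop (𝓝 0) := by
    simpa using (tendsto_gaussianPDFReal_zero_one_atTop.mul (tendsto_inv_atTop_zero.sub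
      (tendsto_pow_atTop three_ne_zero).inv_tendsto_atTop)).neg
  rw [one_sub_stdNormalCDF]
  calc φ v * (v⁻¹ - (v ^ 3)⁻¹) = ∫ t in Ioi v, (1 - 3 / t ^ 4) * φ t := by
        rw [integral_Ioi_of_hasDerivAt_of_tendsto' hderiv hint hlim]; ring
    _ ≤ ∫ t in Ioi v, φ t :=
        setIntegral_mono_on hint (integrable_gaussianPDFReal 0 1).integrableOn measurableSet_Ioi
          fun t ht => mul_le_of_le_one_left (gaussianPDFReal_nonneg 0 1 t)
            (sub_le_self _ (by have := hv.trans ht; positivity))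

noncomputable def millsRatio (v : ℝ) : ℝ := (1 - stdNormalCDF v) / φ v

lemma one_sub_stdNormalCDF_eq_mul_millsRatio (v : ℝ) :
    1 - stdNormalCDF v = φ v * millsRatio v := by
  rw [millsRatio, mul_div_cancel₀ _ (gaussianPDFReal_zero_one_pos v).ne']

lemma millsRatio_pos (v : ℝ) : 0 < millsRatio v :=
  div_pos (sub_pos.2 (stdNormalCDF_lt_one v)) (gaussianPDFReal_zero_one_pos v)

lemma tendsto_mul_millsRatio : Tendsto (fun v => v * millsRatio v) atTop (𝓝 1) := by
  have hlow : Tendsto (fun v : ℝ => 1 - (v ^ 2)⁻¹) atTop (𝓝 1) := by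
    simpa using (tendsto_const_nhds (x := (1 : ℝ))).sub
      (tendsto_pow_atTop two_ne_zero).inv_tendsto_atTop
  refine tendsto_of_tendsto_of_tendsto_of_le_of_le' hlow tendsto_const_nhds ?_ ?_
  all_goals filter_upwards [eventually_gt_atTop 0] with v hv
  all_goals rw [millsRatio, mul_div_assoc']
  · rw [le_div_iff₀ (gaussianPDFReal_zero_one_pos v)]
    calc (1 - (v ^ 2)⁻¹) * φ v = v * (φ v * (v⁻¹ - (v ^ 3)⁻¹)) := by field_simp
      _ ≤ v * (1 - stdNormalCDF v) :=
          mul_le_mul_of_nonneg_left (le_one_sub_stdNormalCDF hv) hv.le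
  · rw [div_le_one (gaussianPDFReal_zero_one_pos v)]
    calc v * (1 - stdNormalCDF v) ≤ v * (φ v / v) :=
          mul_le_mul_of_nonneg_left (one_sub_stdNormalCDF_le hv) hv.le
      _ = φ v := mul_div_cancel₀ _ hv.ne'

lemma tendsto_log_div_sq_atTop : Tendsto (fun v => log v / v ^ 2) atTop (𝓝 0) := by
  have h := isLittleO_log_id_atTop.tendsto_div_nhds_zero.mul tendsto_inv_atTop_zero
  rw [zero_mul] at h
  refine h.congr' ?_
  filter_upwards with v
  simp only [id, div_eq_mul_inv, pow_two, mul_inv, mul_assoc]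

/-- `log (1 - Φ v) = -v² / 2 - log √(2π) - log v + log (v · millsRatio v)`. -/
lemma tendsto_neg_two_mul_log_one_sub_stdNormalCDF_div_sq :
    Tendsto (fun v => -2 * log (1 - stdNormalCDF v) / v ^ 2) atTop (𝓝 1) := by
  have hR : Tendsto (fun v => 2 * log √(2 * π) - 2 * log (v * millsRatio v)) atTop
      (𝓝 (2 * log √(2 * π) - 2 * log 1)) :=
    tendsto_const_nhds.sub ((tendsto_mul_millsRatio.log one_ne_zero).const_mul 2)
  have h := (tendsto_const_nhds (x := (1 : ℝ))).add
    ((hR.div_atTop (tendsto_pow_atTop two_ne_zero)).add (tendsto_log_div_sq_atTop.const_mul 2))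
  rw [zero_add, mul_zero, add_zero] at h
  refine h.congr' ?_
  filter_upwards [eventually_gt_atTop 0] with v hv
  have hφ : exp (-(v ^ 2) / 2) / √(2 * π) ≠ 0 := by positivity
  rw [one_sub_stdNormalCDF_eq_mul_millsRatio, gaussianPDFReal_zero_one,
    log_mul hv.ne' (millsRatio_pos v).ne', log_mul hφ (millsRatio_pos v).ne',
    log_div (exp_pos _).ne' (by positivity), log_exp]
  field_simp
  ring

lemma one_sub_stdNormalCDF_sInf {t : ℝ} (ht : 1 < t) :
    1 - stdNormalCDF (sInf {y : ℝ | t ≤ 1 / (1 - stdNormalCDF y)}) = t⁻¹ := by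
  have ht0 : 0 < t := one_pos.trans ht
  have hs : 1 - t⁻¹ ∈ Ioo 0 1 := ⟨sub_pos.2 (inv_lt_one_of_one_lt₀ ht), by simpa using ht0⟩
  obtain ⟨y₀, hy₀⟩ : 1 - t⁻¹ ∈ range stdNormalCDF :=
    mem_range_of_exists_le_of_exists_ge continuous_stdNormalCDF
      ((tendsto_stdNormalCDF_atBot.eventually_lt_const hs.1).exists.imp fun _ h => h.le)
      ((tendsto_stdNormalCDF_atTop.eventually_const_lt hs.2).exists.imp fun _ h => h.le)
  have hset : {y : ℝ | t ≤ 1 / (1 - stdNormalCDF y)} = Ici y₀ := by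
    ext y
    rw [mem_ofPred_eq, mem_Ici, ← strictMono_stdNormalCDF.le_iff_le (a := y₀), hy₀,
      le_one_div ht0 (sub_pos.2 (stdNormalCDF_lt_one y)), one_div]
    constructor <;> intro h <;> linarith
  rw [hset, csInf_Ici, hy₀]
  ring

section Norming

variable {a b : ℝ → ℝ}

lemma tendsto_quantile_atTop (hb : ∀ᶠ t in atTop, 1 - stdNormalCDF (b t) = t⁻¹) :
    Tendsto b atTop atTop := by
  have h : Tendsto (fun t => stdNormalCDF (b t)) atTop (𝓝 1) := by
    have h0 := tendsto_inv_atTop_zero.congr' (hb.mono fun _ h => h.symm)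
    simpa using (tendsto_const_nhds (x := (1 : ℝ))).sub h0
  refine tendsto_atTop.2 fun K => ?_
  filter_upwards [h.eventually_const_lt (stdNormalCDF_lt_one K)] with t ht
  exact (strictMono_stdNormalCDF.lt_iff_lt.1 ht).le

/-- `-log (1 - Φ (b t)) = log t`, so `b t ^ 2 / (2 log t) → 1`. -/
lemma tendsto_quantile_mul_scale (hb : ∀ᶠ t in atTop, 1 - stdNormalCDF (b t) = t⁻¹)
    (ha : ∀ᶠ t in atTop, a t = 1 / √(2 * log t)) :
    Tendsto (fun t => b t * a t) atTop (𝓝 1) := by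
  have hb_top := tendsto_quantile_atTop hb
  have h := (tendsto_neg_two_mul_log_one_sub_stdNormalCDF_div_sq.comp hb_top).sqrt.inv₀
    (by norm_num)
  rw [sqrt_one, inv_one] at h
  refine h.congr' ?_
  filter_upwards [hb, ha, hb_top.eventually_gt_atTop 0] with t hbt hat hpos
  rw [Function.comp_apply, hbt, log_inv, hat, sqrt_div' _ (sq_nonneg _), sqrt_sq hpos.le]
  field_simp

lemma tendsto_scale_nhds_zero (hb : ∀ᶠ t in atTop, 1 - stdNormalCDF (b t) = t⁻¹)
    (ha : ∀ᶠ t in atTop, a t = 1 / √(2 * log t)) : Tendsto a atTop (𝓝 0) := by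
  have hb_top := tendsto_quantile_atTop hb
  have h := (tendsto_quantile_mul_scale hb ha).mul hb_top.inv_tendsto_atTop
  rw [mul_zero] at h
  refine h.congr' ?_
  filter_upwards [hb_top.eventually_gt_atTop 0] with t ht
  simp only [Pi.inv_apply]
  field_simp

/-- With `w = b + a z` and `d = a z`, `t (1 - Φ w) = (1 - Φ w) / (1 - Φ b)`
`= e^{-(b d + d² / 2)} · (w R(w)) / (b R(b)) · b / w` for the Mills ratio `R`. -/
lemma tendsto_mul_one_sub_stdNormalCDF_quantile_add
    (hb : ∀ᶠ t in atTop, 1 - stdNormalCDF (b t) = t⁻¹)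
    (ha : ∀ᶠ t in atTop, a t = 1 / √(2 * log t)) (z : ℝ) :
    Tendsto (fun t => t * (1 - stdNormalCDF (b t + a t * z))) atTop (𝓝 (exp (-z))) := by
  have hb_top := tendsto_quantile_atTop hb
  have hab := tendsto_quantile_mul_scale hb ha
  have hd : Tendsto (fun t => a t * z) atTop (𝓝 0) := by
    simpa using (tendsto_scale_nhds_zero hb ha).mul_const z
  have hw_top : Tendsto (fun t => b t + a t * z) atTop atTop := hb_top.atTop_add hd
  have hexp : Tendsto (fun t => exp (-(b t * (a t * z) + (a t * z) ^ 2 / 2))) atTop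
      (𝓝 (exp (-z))) := by
    have h := (((hab.mul_const z).add ((hd.pow 2).div_const 2)).neg).rexp
    simpa [mul_assoc] using h
  have hR := (tendsto_mul_millsRatio.comp hw_top).div (tendsto_mul_millsRatio.comp hb_top)
    one_ne_zero
  have hbw : Tendsto (fun t => (1 + a t * z * (b t)⁻¹)⁻¹) atTop (𝓝 1) := by
    simpa using ((tendsto_const_nhds (x := (1 : ℝ))).add
      (hd.mul hb_top.inv_tendsto_atTop)).inv₀ (by norm_num)
  have h := (hexp.mul hR).mul hbw
  rw [div_one, mul_one, mul_one] at h
  refine h.congr' ?_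
  filter_upwards [hb, eventually_gt_atTop 0, hb_top.eventually_gt_atTop 0,
    hw_top.eventually_gt_atTop 0] with t hbt ht hbpos hwpos
  have ht' : t * (1 - stdNormalCDF (b t + a t * z)) =
      (1 - stdNormalCDF (b t + a t * z)) / (1 - stdNormalCDF (b t)) := by
    rw [hbt, div_inv_eq_mul, mul_comm]
  simp only [Function.comp_apply, Pi.div_apply]
  rw [ht', one_sub_stdNormalCDF_eq_mul_millsRatio, one_sub_stdNormalCDF_eq_mul_millsRatio,
    gaussianPDFReal_zero_one_add]
  have := gaussianPDFReal_zero_one_pos (b t)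
  have := millsRatio_pos (b t)
  field_simp

end Norming

lemma tendsto_of_squeeze_family {ι κ α : Type*} [TopologicalSpace α] [Preorder α]
    [OrderTopology α] {l : Filter ι} {m : Filter κ} [m.NeBot] {f : ι → α} {L U : κ → ι → α}
    {lo hi : κ → α} {c : α} (hL : ∀ M, Tendsto (L M) l (𝓝 (lo M)))
    (hU : ∀ M, Tendsto (U M) l (𝓝 (hi M))) (hLf : ∀ᶠ M in m, ∀ᶠ t in l, L M t ≤ f t)
    (hfU : ∀ᶠ M in m, ∀ᶠ t in l, f t ≤ U M t) (hlo : Tendsto lo m (𝓝 c))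
    (hhi : Tendsto hi m (𝓝 c)) : Tendsto f l (𝓝 c) := by
  refine tendsto_order.2 ⟨fun c' hc' => ?_, fun c' hc' => ?_⟩
  · obtain ⟨M, hM, hLfM⟩ := ((hlo.eventually (lt_mem_nhds hc')).and hLf).exists
    filter_upwards [(hL M).eventually (lt_mem_nhds hM), hLfM] with t h₁ h₂
    exact h₁.trans_le h₂
  · obtain ⟨M, hM, hfUM⟩ := ((hhi.eventually (gt_mem_nhds hc')).and hfU).exists
    filter_upwards [(hU M).eventually (gt_mem_nhds hM), hfUM] with t h₁ h₂
    exact h₂.trans_lt h₁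

lemma abs_mul_le_of_mul_lt_of_le_mul {ρ α y M r : ℝ} (hρ : |ρ| ≤ 1) (hα : 0 ≤ α) (hM : |y| ≤ M)
    (h₁ : α * y < r) (h₂ : r ≤ α * M) : |ρ * r| ≤ α * M := by
  have hαy : α * -M ≤ α * y := mul_le_mul_of_nonneg_left (by linarith [neg_abs_le y]) hα
  have hr : |r| ≤ α * M := abs_le.2 ⟨by linarith, h₂⟩
  calc |ρ * r| = |ρ| * |r| := abs_mul ρ r
    _ ≤ 1 * (α * M) := mul_le_mul hρ hr (abs_nonneg r) zero_le_one
    _ = α * M := one_mul _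

section Bivariate

variable {Ω : Type*} {N₁ N₂ X : Ω → ℝ} {c ρ α β x y M : ℝ}

lemma inter_subset_union_of_abs_le (hX : ∀ ω, X ω = c * N₁ ω + ρ * N₂ ω) (hc : 0 < c)
    (hρ : |ρ| ≤ 1) (hα : 0 < α) (hM : |y| ≤ M) :
    {ω | N₁ ω ≤ (x - α * M) / c} ∩ {ω | β + α * y < N₂ ω} ⊆
      {ω | X ω - ρ * β ≤ x ∧ y < (N₂ ω - β) / α} ∪ {ω | β + α * M < N₂ ω} := by
  rintro ω ⟨h₁, h₂⟩
  by_cases h₃ : β + α * M < N₂ ω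
  · exact Or.inr h₃
  have hρN := (abs_le.1 (abs_mul_le_of_mul_lt_of_le_mul (r := N₂ ω - β) hρ hα.le hM
    (by simp only [mem_ofPred_eq] at h₂; linarith) (by linarith))).2
  simp only [mem_ofPred_eq, le_div_iff₀ hc] at h₁ h₂
  refine Or.inl ⟨?_, (lt_div_iff₀ hα).2 (by linarith)⟩
  rw [hX]
  linarith

lemma subset_inter_union_of_abs_le (hX : ∀ ω, X ω = c * N₁ ω + ρ * N₂ ω) (hc : 0 < c)
    (hρ : |ρ| ≤ 1) (hα : 0 < α) (hM : |y| ≤ M) :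
    {ω | X ω - ρ * β ≤ x ∧ y < (N₂ ω - β) / α} ⊆
      {ω | N₁ ω ≤ (x + α * M) / c} ∩ {ω | β + α * y < N₂ ω} ∪ {ω | β + α * M < N₂ ω} := by
  rintro ω ⟨h₁, h₂⟩
  rw [lt_div_iff₀ hα] at h₂
  by_cases h₃ : β + α * M < N₂ ω
  · exact Or.inr h₃
  have hρN := (abs_le.1 (abs_mul_le_of_mul_lt_of_le_mul (r := N₂ ω - β) hρ hα.le hM
    (by linarith) (by linarith))).1
  rw [hX] at h₁
  refine Or.inl ⟨?_, by simp only [mem_ofPred_eq]; linarith⟩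
  simp only [mem_ofPred_eq, le_div_iff₀ hc]
  linarith

variable [MeasurableSpace Ω] {P : Measure Ω} [IsProbabilityMeasure P] {F₁ F₂ : ℝ → ℝ}

lemma measureReal_setOf_lt_eq_one_sub (hN₂m : Measurable N₂)
    (hF₂ : ∀ x, P.real {ω | N₂ ω ≤ x} = F₂ x) (u : ℝ) : P.real {ω | u < N₂ ω} = 1 - F₂ u := by
  rw [← hF₂, ← probReal_compl_eq_one_sub (measurableSet_le hN₂m measurable_const)]
  simp only [compl_ofPred, not_le]

lemma measureReal_le_inter_lt_eq_mul (hN₂m : Measurable N₂) (hindep : IndepFun N₁ N₂ P)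
    (hF₁ : ∀ x, P.real {ω | N₁ ω ≤ x} = F₁ x) (hF₂ : ∀ x, P.real {ω | N₂ ω ≤ x} = F₂ x)
    (q u : ℝ) : P.real ({ω | N₁ ω ≤ q} ∩ {ω | u < N₂ ω}) = F₁ q * (1 - F₂ u) := by
  rw [← hF₁, ← measureReal_setOf_lt_eq_one_sub hN₂m hF₂, measureReal_def, measureReal_def,
    measureReal_def, ← ENNReal.toReal_mul]
  exact congrArg ENNReal.toReal
    (hindep.measure_inter_preimage_eq_mul (Iic q) (Ioi u) measurableSet_Iic measurableSet_Ioi)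

lemma le_measureReal_event (hN₂m : Measurable N₂) (hindep : IndepFun N₁ N₂ P)
    (hF₁ : ∀ x, P.real {ω | N₁ ω ≤ x} = F₁ x) (hF₂ : ∀ x, P.real {ω | N₂ ω ≤ x} = F₂ x)
    (hX : ∀ ω, X ω = c * N₁ ω + ρ * N₂ ω) (hc : 0 < c) (hρ : |ρ| ≤ 1) (hα : 0 < α)
    (hM : |y| ≤ M) :
    F₁ ((x - α * M) / c) * (1 - F₂ (β + α * y)) - (1 - F₂ (β + α * M)) ≤
      P.real {ω | X ω - ρ * β ≤ x ∧ y < (N₂ ω - β) / α} := by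
  rw [← measureReal_le_inter_lt_eq_mul hN₂m hindep hF₁ hF₂,
    ← measureReal_setOf_lt_eq_one_sub hN₂m hF₂]
  have h := (measureReal_mono (μ := P) (inter_subset_union_of_abs_le (x := x) (β := β)
    hX hc hρ hα hM)).trans (measureReal_union_le _ _)
  linarith

lemma measureReal_event_le (hN₂m : Measurable N₂) (hindep : IndepFun N₁ N₂ P)
    (hF₁ : ∀ x, P.real {ω | N₁ ω ≤ x} = F₁ x) (hF₂ : ∀ x, P.real {ω | N₂ ω ≤ x} = F₂ x)
    (hX : ∀ ω, X ω = c * N₁ ω + ρ * N₂ ω) (hc : 0 < c) (hρ : |ρ| ≤ 1) (hα : 0 < α)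
    (hM : |y| ≤ M) :
    P.real {ω | X ω - ρ * β ≤ x ∧ y < (N₂ ω - β) / α} ≤
      F₁ ((x + α * M) / c) * (1 - F₂ (β + α * y)) + (1 - F₂ (β + α * M)) := by
  rw [← measureReal_le_inter_lt_eq_mul hN₂m hindep hF₁ hF₂,
    ← measureReal_setOf_lt_eq_one_sub hN₂m hF₂]
  exact (measureReal_mono (subset_inter_union_of_abs_le hX hc hρ hα hM)).trans
    (measureReal_union_le _ _)

end Bivariate

theorem stmt_19_general {Ω : Type*} [MeasureSpace Ω] [IsProbabilityMeasure (ℙ : Measure Ω)]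
    (N₁ N₂ : Ω → ℝ) (hN₂m : Measurable N₂)
    (hindep : IndepFun N₁ N₂ ℙ)
    (hN₁ : ∀ x : ℝ, (ℙ {ω | N₁ ω ≤ x}).toReal = stdNormalCDF x)
    (hN₂ : ∀ x : ℝ, (ℙ {ω | N₂ ω ≤ x}).toReal = stdNormalCDF x)
    (ρ : ℝ) (hρ : ρ ∈ Set.Ioo (-1 : ℝ) 1)
    (X : Ω → ℝ) (hX : ∀ ω, X ω = Real.sqrt (1 - ρ ^ 2) * N₁ ω + ρ * N₂ ω)
    (a b : ℝ → ℝ)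
    (hb : ∀ t : ℝ, b t = sInf {y : ℝ | t ≤ 1 / (1 - stdNormalCDF y)})
    (ha : ∀ t : ℝ, 1 < t → a t = 1 / Real.sqrt (2 * Real.log t)) :
    ∀ x y : ℝ, Tendsto (fun t : ℝ =>
        t * (ℙ {ω | X ω - ρ * b t ≤ x ∧ y < (N₂ ω - b t) / a t}).toReal) atTop
      (nhds (stdNormalCDF (x / Real.sqrt (1 - ρ ^ 2)) * Real.exp (-y))) := by
  intro x y
  have hc : 0 < √(1 - ρ ^ 2) := sqrt_pos.2 (by nlinarith [hρ.1, hρ.2])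
  have hρ' : |ρ| ≤ 1 := abs_le.2 ⟨hρ.1.le, hρ.2.le⟩
  have hb' : ∀ᶠ t in atTop, 1 - stdNormalCDF (b t) = t⁻¹ :=
    (eventually_gt_atTop 1).mono fun t ht => hb t ▸ one_sub_stdNormalCDF_sInf ht
  have ha' : ∀ᶠ t in atTop, a t = 1 / √(2 * log t) := (eventually_gt_atTop 1).mono ha
  have ha_pos : ∀ᶠ t in atTop, 0 < a t := (eventually_gt_atTop 1).mono fun t ht => by
    rw [ha t ht]; have := log_pos ht; positivity
  have htail := tendsto_mul_one_sub_stdNormalCDF_quantile_add hb' ha'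
  have hΦ (s : ℝ) : Tendsto (fun t => stdNormalCDF ((x + a t * s) / √(1 - ρ ^ 2))) atTop
      (𝓝 (stdNormalCDF (x / √(1 - ρ ^ 2)))) := by
    have h := (tendsto_const_nhds (x := x)).add
      ((tendsto_scale_nhds_zero hb' ha').mul_const s)
    rw [zero_mul, add_zero] at h
    exact (continuous_stdNormalCDF.tendsto _).comp (h.div_const _)
  refine tendsto_of_squeeze_family (m := atTop)
    (fun M => ((hΦ (-M)).mul (htail y)).sub (htail M))
    (fun M => ((hΦ M).mul (htail y)).add (htail M)) ?_ ?_ ?_ ?_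
  · filter_upwards [eventually_ge_atTop |y|] with M hM
    filter_upwards [eventually_gt_atTop 0, ha_pos] with t ht hat
    have h := le_measureReal_event (x := x) (β := b t) hN₂m hindep hN₁ hN₂ hX hc hρ' hat hM
    rw [mul_neg, ← sub_eq_add_neg, ← measureReal_def]
    linarith [mul_le_mul_of_nonneg_left h ht.le]
  · filter_upwards [eventually_ge_atTop |y|] with M hM
    filter_upwards [eventually_gt_atTop 0, ha_pos] with t ht hat
    have h := measureReal_event_le (x := x) (β := b t) hN₂m hindep hN₁ hN₂ hX hc hρ' hat hM
    rw [← measureReal_def]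
    linarith [mul_le_mul_of_nonneg_left h ht.le]
  · simpa using tendsto_const_nhds.sub tendsto_exp_neg_atTop_nhds_zero
  · simpa using tendsto_const_nhds.add tendsto_exp_neg_atTop_nhds_zero

/-- Conditioned limit theorem for the bivariate normal: with `N₁ ⟂ N₂` standard
normal, `ρ ∈ (-1,1)`, `X = √(1-ρ²)N₁ + ρN₂`, `Y = N₂`, and the Gumbel norming
functions `a, b` for the standard normal, one has
`t·P[X - ρ b(t) ≤ x, (Y - b(t))/a(t) > y] → Φ(x/√(1-ρ²)) e^{-y}`. -/
theorem stmt_19 {Ω : Type*} [MeasureSpace Ω] [IsProbabilityMeasure (ℙ : Measure Ω)]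
    (N₁ N₂ : Ω → ℝ) (hN₁m : Measurable N₁) (hN₂m : Measurable N₂)
    (hindep : IndepFun N₁ N₂ ℙ)
    (hN₁ : ∀ x : ℝ, (ℙ {ω | N₁ ω ≤ x}).toReal = stdNormalCDF x)
    (hN₂ : ∀ x : ℝ, (ℙ {ω | N₂ ω ≤ x}).toReal = stdNormalCDF x)
    (ρ : ℝ) (hρ : ρ ∈ Set.Ioo (-1 : ℝ) 1)
    (X : Ω → ℝ) (hX : ∀ ω, X ω = Real.sqrt (1 - ρ ^ 2) * N₁ ω + ρ * N₂ ω)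
    (a b : ℝ → ℝ)
    (hb : ∀ t : ℝ, b t = sInf {y : ℝ | t ≤ 1 / (1 - stdNormalCDF y)})
    (ha : ∀ t : ℝ, 1 < t → a t = 1 / Real.sqrt (2 * Real.log t)) :
    ∀ x y : ℝ, Tendsto (fun t : ℝ =>
        t * (ℙ {ω | X ω - ρ * b t ≤ x ∧ y < (N₂ ω - b t) / a t}).toReal) atTop
      (nhds (stdNormalCDF (x / Real.sqrt (1 - ρ ^ 2)) * Real.exp (-y))) :=
  stmt_19_general N₁ N₂ hN₂m hindep hN₁ hN₂ ρ hρ X hX a b hb ha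
end
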